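/- For every integer N ≥ 4, C_N/N ≥ 2/5, i.e. (1 + L_{N−3})/N ≥ 2/5. -/

import Mathlib

/-- `Lseg n = Σ_{k=1}^{n} (−1)^{k+1} (2^{k−1}/k!) (n−k+1)`, the expected number of
transmissions in one slot from a fully occupied segment of `n` nodes (so `Lseg 0 = 0`). -/
noncomputable def Lseg (n : ℕ) : ℝ :=
  ∑ k ∈ Finset.Icc 1 n,
    (-1 : ℝ) ^ (k + 1) * (2 ^ (k - 1) / (Nat.factorial k : ℝ)) * ((n : ℝ) - (k : ℝ) + 1)

/-- `C_k = 1 + L_{k−3}`, the expected number of transmissions in one slot from a fully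
occupied circle of `k ≥ 3` nodes. -/
noncomputable def Ccirc (k : ℕ) : ℝ := 1 + Lseg (k - 3)

/-!
The increments `L_{n+1} - L_n = S_{n+1}` are the partial sums `S_m = coeffSum m` of the alternating series
`Σ (-1)^{k+1} 2^{k-1}/k!`, whose terms decrease in absolute value from `k = 1` on. Hence
`S_{m+2} ≥ min S_m S_{m+1}`, and since `S_5 = 7/15` and `S_6 = 19/45`, every `S_m` with `m ≥ 5`
is at least `2/5`. So `1 + L_n - 2/5 (n + 3)` is nondecreasing from `n = 4` on, and it is
nonnegative for `n = 1, …, 4` by direct computation.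
-/

namespace Lseg

open Finset

noncomputable def coeff (k : ℕ) : ℝ := (-1 : ℝ) ^ (k + 1) * (2 ^ (k - 1) / (Nat.factorial k : ℝ))

noncomputable def coeffSum (m : ℕ) : ℝ := ∑ k ∈ Icc 1 m, coeff k

lemma coeff_succ {k : ℕ} (hk : 1 ≤ k) : coeff (k + 1) = -(2 / (k + 1)) * coeff k := by
  obtain ⟨j, rfl⟩ := Nat.exists_eq_add_of_le' hk
  simp only [coeff, Nat.add_sub_cancel, Nat.factorial_succ, Nat.cast_mul, Nat.cast_add,
    Nat.cast_one, pow_succ]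
  field_simp

lemma coeff_nonneg_of_odd {k : ℕ} (hk : Odd k) : 0 ≤ coeff k := by
  rw [coeff, hk.add_one.neg_one_pow, one_mul]
  positivity

lemma coeff_add_coeff_succ_nonneg {k : ℕ} (hk : Odd k) : 0 ≤ coeff k + coeff (k + 1) := by
  have hk1 : (1 : ℝ) ≤ k := by exact_mod_cast hk.pos
  have hratio : 2 / ((k : ℝ) + 1) ≤ 1 := by rw [div_le_one (by positivity)]; linarith
  rw [coeff_succ hk.pos]
  nlinarith [coeff_nonneg_of_odd hk]

lemma coeffSum_succ (m : ℕ) : coeffSum (m + 1) = coeffSum m + coeff (m + 1) :=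
  sum_Icc_succ_top (Nat.le_add_left 1 m) _

lemma min_coeffSum_le_coeffSum_add_two (m : ℕ) :
    min (coeffSum m) (coeffSum (m + 1)) ≤ coeffSum (m + 2) := by
  rw [coeffSum_succ (m + 1), coeffSum_succ m]
  rcases Nat.even_or_odd (m + 1) with he | ho
  · have := coeff_nonneg_of_odd he.add_one
    exact (min_le_right _ _).trans (by linarith)
  · have := coeff_add_coeff_succ_nonneg ho
    exact (min_le_left _ _).trans (by linarith)

lemma le_coeffSum_add {c : ℝ} {m : ℕ} (h₀ : c ≤ coeffSum m) (h₁ : c ≤ coeffSum (m + 1))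
    (k : ℕ) : c ≤ coeffSum (m + k) := by
  suffices ∀ k, c ≤ coeffSum (m + k) ∧ c ≤ coeffSum (m + k + 1) from (this k).1
  intro k
  induction k with
  | zero => exact ⟨h₀, h₁⟩
  | succ k ih =>
    refine ⟨ih.2, ?_⟩
    have := min_coeffSum_le_coeffSum_add_two (m + k)
    exact (le_min ih.1 ih.2).trans this

lemma two_fifths_le_coeffSum {m : ℕ} (hm : 5 ≤ m) : 2 / 5 ≤ coeffSum m := by
  have h₅ : coeffSum 5 = 7 / 15 := by norm_num [coeffSum, coeff, sum_Icc_succ_top, Nat.factorial]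
  have h₆ : coeffSum 6 = 19 / 45 := by norm_num [coeffSum, coeff, sum_Icc_succ_top, Nat.factorial]
  obtain ⟨k, rfl⟩ := Nat.exists_eq_add_of_le hm
  exact le_coeffSum_add (by rw [h₅]; norm_num) (by rw [h₆]; norm_num) k

lemma succ_eq_add_coeffSum (n : ℕ) : Lseg (n + 1) = Lseg n + coeffSum (n + 1) := by
  have hsplit : ∀ k ∈ Icc 1 (n + 1),
      (-1 : ℝ) ^ (k + 1) * (2 ^ (k - 1) / (Nat.factorial k : ℝ)) * (((n + 1 : ℕ) : ℝ) - k + 1)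
        = (-1 : ℝ) ^ (k + 1) * (2 ^ (k - 1) / (Nat.factorial k : ℝ)) * ((n : ℝ) - k + 1)
          + coeff k := by
    intro k _
    rw [coeff]
    push_cast
    ring
  rw [Lseg, sum_congr rfl hsplit, sum_add_distrib, sum_Icc_succ_top (Nat.le_add_left 1 n)]
  simp [Lseg, coeffSum]

lemma two_fifths_mul_le_one_add {n : ℕ} (hn : 1 ≤ n) : 2 / 5 * ((n : ℝ) + 3) ≤ 1 + Lseg n := by
  rcases Nat.lt_or_ge n 4 with hlt | hge
  · interval_cases n <;> norm_num [Lseg, sum_Icc_succ_top, Nat.factorial]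
  · induction n, hge using Nat.le_induction with
    | base => norm_num [Lseg, sum_Icc_succ_top, Nat.factorial]
    | succ n hn4 ih =>
      have := two_fifths_le_coeffSum (show 5 ≤ n + 1 by omega)
      rw [succ_eq_add_coeffSum]
      push_cast
      linarith [ih (by omega)]

end Lseg

theorem Ccirc_div_ge (N : ℕ) (hN : 4 ≤ N) : Ccirc N / (N : ℝ) ≥ 2 / 5 := by
  obtain ⟨n, rfl⟩ := Nat.exists_eq_add_of_le' (show 3 ≤ N by omega)
  have hpos : (0 : ℝ) < (n + 3 : ℕ) := by positivity
  rw [Ccirc, Nat.add_sub_cancel, ge_iff_le, le_div_iff₀ hpos]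
  have := Lseg.two_fifths_mul_le_one_add (show 1 ≤ n by omega)
  push_cast
  linarith
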